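/- arXiv:1006.0900 — 2 statements merged into one kernel-verified Lean document; each statement's English description precedes it below -/
import Mathlib

section
/- Let μ be a nontrivial probability measure on the unit circle with orthonormal polynomials φ_n. Then for every n ≥ 1 one has the identity ‖φ_n'/n‖² = 1 + ‖(φ_n^*)'/n‖², where ‖·‖ is the L²(dμ) norm. In particular, ‖φ_n'/n‖ ≥ 1 for all n ≥ 1, and μ has normal L²-derivative behavior if and only if ‖(φ_n^*)'/n‖ → 0 as n → ∞. -/
open MeasureTheory Polynomial Filter Topology ComplexConjugate

noncomputable section

/-- The reversed (Szegő `*`-transformed) polynomial of a degree-`n` polynomial: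
`P*(z) = z^n conj(P(1/conj z))`, i.e. the coefficients are conjugated and reversed. -/
def starPoly (n : ℕ) (P : Polynomial ℂ) : Polynomial ℂ :=
  (P.map (starRingEnd ℂ)).reflect n

/-- The `L²(dμ)` norm of a polynomial. -/
def l2norm (μ : Measure ℂ) (P : Polynomial ℂ) : ℝ :=
  (∫ z, ‖P.eval z‖ ^ 2 ∂μ) ^ (1 / 2 : ℝ)

/-- `φ` is the sequence of orthonormal polynomials for the measure `μ`:
`φ n` has degree `n`, a positive (real) leading coefficient, and the family
is orthonormal in `L²(dμ)`. -/
structure IsOPUC (μ : Measure ℂ) (φ : ℕ → Polynomial ℂ) : Prop where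
  deg : ∀ n : ℕ, (φ n).degree = n
  lead_re_pos : ∀ n : ℕ, 0 < ((φ n).leadingCoeff).re
  lead_im_zero : ∀ n : ℕ, ((φ n).leadingCoeff).im = 0
  orth : ∀ m n : ℕ,
    ∫ z, conj ((φ m).eval z) * (φ n).eval z ∂μ = if m = n then 1 else 0

/-- The monic orthogonal polynomials `Φ_n` associated to the orthonormal ones. -/
def monicOP (φ : ℕ → Polynomial ℂ) (n : ℕ) : Polynomial ℂ :=
  Polynomial.C ((φ n).leadingCoeff)⁻¹ * φ n

/-- The Verblunsky coefficients `α_n = -conj (Φ_{n+1}(0))`. -/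
def verblunsky (φ : ℕ → Polynomial ℂ) (n : ℕ) : ℂ :=
  -conj ((monicOP φ (n + 1)).eval 0)

/-- The measure lives on the unit circle `∂𝔻`. -/
def OnCircle (μ : Measure ℂ) : Prop := μ (Metric.sphere (0 : ℂ) 1)ᶜ = 0

/-- The measure is nontrivial: it is not supported on any finite set
(equivalently, its support is infinite). -/
def NontrivialSupport (μ : Measure ℂ) : Prop :=
  ∀ s : Finset ℂ, μ ((↑s : Set ℂ))ᶜ ≠ 0

/-- `μ` has normal `L²`-derivative behavior: `‖φ_n'‖_{L²(dμ)} / n → 1`. -/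
def NormalBehavior (μ : Measure ℂ) (φ : ℕ → Polynomial ℂ) : Prop :=
  Tendsto (fun n : ℕ => l2norm μ (derivative (φ n)) / n) atTop (𝓝 1)

/-!
On the circle `z φₙ' = n φₙ - S`, where `S` is the reversal in degree `n - 1` of `(φₙ*)'` (a
polynomial identity). Reversal preserves `|·|` on the circle, so `|S| = |(φₙ*)'|` there, and
`S` has degree `< n`, so it is orthogonal to `φₙ`. Pythagoras in `L²(μ)` then gives
`‖φₙ'‖² = n² + ‖(φₙ*)'‖²`, from which the other two claims follow at once.
-/

namespace Polynomial

lemma coeff_starPoly (n : ℕ) (P : ℂ[X]) (i : ℕ) :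
    (starPoly n P).coeff i = conj (P.coeff (revAt n i)) := by
  simp [starPoly, coeff_reflect, coeff_map]

lemma natDegree_starPoly_le {n : ℕ} {P : ℂ[X]} (h : P.natDegree ≤ n) :
    (starPoly n P).natDegree ≤ n :=
  natDegree_reflect_le.trans (max_le le_rfl (natDegree_map_le.trans h))

/-- Coefficientwise, both sides have `(m + 1 - i) * P.coeff i` in degree `i`. -/
lemma starPoly_derivative_starPoly {m : ℕ} {P : ℂ[X]} (h : P.natDegree ≤ m + 1) :
    starPoly m (derivative (starPoly (m + 1) P)) = C ((m + 1 : ℕ) : ℂ) * P - X * derivative P := by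
  ext i
  rw [coeff_starPoly, coeff_derivative, coeff_starPoly, coeff_sub, coeff_C_mul]
  rcases i with _ | i
  · simp [revAt_le, mul_comm]
  rw [coeff_X_mul, coeff_derivative]
  rcases le_or_gt (i + 1) m with hi | hi
  · rw [revAt_le hi, revAt_le (by omega), show m + 1 - (m - (i + 1) + 1) = i + 1 by omega]
    simp only [map_mul, map_add, map_natCast, map_one, Complex.conj_conj]
    push_cast [Nat.cast_sub hi]
    ring
  · rw [revAt_eq_self_of_lt hi, revAt_eq_self_of_lt (by omega),
      coeff_eq_zero_of_natDegree_lt (by omega : P.natDegree < i + 1 + 1)]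
    obtain rfl | hi : i = m ∨ m + 1 < i + 1 := by omega
    · simp [mul_comm]
    · simp [coeff_eq_zero_of_natDegree_lt (h.trans_lt hi)]

lemma eval_starPoly {n : ℕ} {P : ℂ[X]} (h : P.natDegree ≤ n) {z : ℂ} (hz : ‖z‖ = 1) :
    (starPoly n P).eval z = z ^ n * conj (P.eval z) := by
  have hz0 : z ≠ 0 := ne_zero_of_norm_ne_zero (by simp [hz])
  have := invertibleOfNonzero (inv_ne_zero hz0)
  have key := eval₂_reflect_mul_pow (RingHom.id ℂ) z⁻¹ n (P.map (starRingEnd ℂ))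
    (natDegree_map_le.trans h)
  rw [invOf_eq_inv, inv_inv, eval₂_id, eval₂_id, eval_map, Complex.inv_eq_conj hz,
    eval₂_at_apply] at key
  rw [starPoly, ← key, ← Complex.inv_eq_conj hz, mul_left_comm, ← mul_pow,
    mul_inv_cancel₀ hz0, one_pow, mul_one]

lemma norm_eval_starPoly {n : ℕ} {P : ℂ[X]} (h : P.natDegree ≤ n) {z : ℂ} (hz : ‖z‖ = 1) :
    ‖(starPoly n P).eval z‖ = ‖P.eval z‖ := by
  rw [eval_starPoly h hz, norm_mul, norm_pow, hz, one_pow, one_mul, RCLike.norm_conj]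

end Polynomial

lemma l2norm_nonneg (μ : Measure ℂ) (P : ℂ[X]) : 0 ≤ l2norm μ P :=
  Real.rpow_nonneg (integral_nonneg fun _ => by positivity) _

lemma l2norm_sq (μ : Measure ℂ) (P : ℂ[X]) :
    l2norm μ P ^ 2 = ∫ z, ‖P.eval z‖ ^ 2 ∂μ := by
  rw [l2norm, ← Real.rpow_natCast, ← Real.rpow_mul (integral_nonneg fun _ => by positivity)]
  norm_num

lemma integral_norm_sub_sq_of_integral_conj_mul_eq_zero {α : Type*} [MeasurableSpace α]
    {μ : Measure α} {f g : α → ℂ} (hf : Integrable (fun x => ‖f x‖ ^ 2) μ)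
    (hg : Integrable (fun x => ‖g x‖ ^ 2) μ) (hfg : Integrable (fun x => conj (f x) * g x) μ)
    (h : ∫ x, conj (f x) * g x ∂μ = 0) :
    ∫ x, ‖f x - g x‖ ^ 2 ∂μ = ∫ x, ‖f x‖ ^ 2 ∂μ + ∫ x, ‖g x‖ ^ 2 ∂μ := by
  have hpt : ∀ x, ‖f x - g x‖ ^ 2 = ‖f x‖ ^ 2 + ‖g x‖ ^ 2 - 2 * RCLike.re (conj (f x) * g x) :=
    fun x => by rw [norm_sub_sq (𝕜 := ℂ), RCLike.inner_apply, mul_comm (g x)]; ring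
  simp_rw [hpt]
  have hfg' : Integrable (fun x => ‖f x‖ ^ 2 + ‖g x‖ ^ 2) μ := hf.add hg
  rw [integral_sub hfg' (hfg.re.const_mul 2), integral_add hf hg, integral_const_mul,
    integral_re hfg, h, map_zero, mul_zero, sub_zero]

section Circle

variable {μ : Measure ℂ}

lemma OnCircle.ae_norm_eq_one (hμ : OnCircle μ) : ∀ᵐ z ∂μ, ‖z‖ = 1 :=
  eventually_of_mem (mem_ae_iff.2 hμ) fun _ => mem_sphere_zero_iff_norm.1

lemma OnCircle.integrable [IsFiniteMeasure μ] (hμ : OnCircle μ) {E : Type*}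
    [NormedAddCommGroup E] {f : ℂ → E} (hf : Continuous f) : Integrable f μ := by
  obtain ⟨C, hC⟩ := (isCompact_sphere (0 : ℂ) 1).exists_bound_of_continuousOn hf.continuousOn
  refine Integrable.mono' (integrable_const C) hf.aestronglyMeasurable ?_
  filter_upwards [hμ.ae_norm_eq_one] with z hz
  exact hC z (by simpa using hz)

variable {φ : ℕ → ℂ[X]}

lemma IsOPUC.integral_norm_sq (hφ : IsOPUC μ φ) (n : ℕ) : ∫ z, ‖(φ n).eval z‖ ^ 2 ∂μ = 1 := by
  have h := hφ.orth n n
  rw [if_pos rfl] at h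
  simp_rw [Complex.conj_mul', ← Complex.ofReal_pow, integral_complex_ofReal] at h
  exact_mod_cast h

lemma IsOPUC.integral_conj_mul_eq_zero [IsFiniteMeasure μ] (hμ : OnCircle μ) (hφ : IsOPUC μ φ)
    {n : ℕ} {R : ℂ[X]} (hR : R.degree < n) : ∫ z, conj ((φ n).eval z) * R.eval z ∂μ = 0 := by
  suffices ∀ d : ℕ, ∀ R : ℂ[X], R.degree < d → ∀ n, d ≤ n →
      ∫ z, conj ((φ n).eval z) * R.eval z ∂μ = 0 from this n R hR n le_rfl
  intro d
  induction d with
  | zero => intro R hR n _; simp [degree_eq_bot.1 (WithBot.lt_coe_bot.1 hR)]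
  | succ d ih =>
    intro R hR n hn
    have hdeg : (φ d).natDegree = d := natDegree_eq_of_degree_eq_some (hφ.deg d)
    have hlead : (φ d).leadingCoeff ≠ 0 :=
      leadingCoeff_ne_zero.2 fun h0 => by simpa [h0] using hφ.deg d
    set c := R.coeff d / (φ d).leadingCoeff
    have hS : (R - C c * φ d).degree < d := by
      rw [degree_lt_iff_coeff_zero]
      intro k hk
      rw [coeff_sub, coeff_C_mul]
      obtain rfl | hk := hk.eq_or_lt
      · rw [show (φ d).coeff d = (φ d).leadingCoeff by rw [leadingCoeff, hdeg],
          div_mul_cancel₀ _ hlead, sub_self]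
      · rw [coeff_eq_zero_of_degree_lt (hR.trans_le (by exact_mod_cast hk)),
          coeff_eq_zero_of_natDegree_lt (hdeg.trans_lt hk), mul_zero, sub_zero]
    have hsplit : R = C c * φ d + (R - C c * φ d) := by ring
    rw [hsplit]
    simp only [eval_add, eval_mul, eval_C, mul_add]
    rw [integral_add (hμ.integrable (by fun_prop)) (hμ.integrable (by fun_prop)),
      ih _ hS n (by omega), add_zero]
    simp_rw [mul_left_comm _ c]
    rw [integral_const_mul, hφ.orth n d, if_neg (by omega), mul_zero]

lemma IsOPUC.l2norm_derivative_sq [IsFiniteMeasure μ] (hμ : OnCircle μ) (hφ : IsOPUC μ φ)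
    {n : ℕ} (hn : n ≠ 0) :
    l2norm μ (derivative (φ n)) ^ 2 = n ^ 2 + l2norm μ (derivative (starPoly n (φ n))) ^ 2 := by
  obtain ⟨m, rfl⟩ := Nat.exists_eq_add_one_of_ne_zero hn
  set P := φ (m + 1)
  set S := C ((m + 1 : ℕ) : ℂ) * P - X * derivative P
  have hP : P.natDegree = m + 1 := natDegree_eq_of_degree_eq_some (hφ.deg _)
  have hS : starPoly m (derivative (starPoly (m + 1) P)) = S := starPoly_derivative_starPoly hP.le
  have hQ' : (derivative (starPoly (m + 1) P)).natDegree ≤ m :=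
    (natDegree_derivative_le _).trans (Nat.sub_le_sub_right (natDegree_starPoly_le hP.le) 1)
  have hSdeg : S.degree < ↑(m + 1) := by
    rw [← hS]
    exact (degree_le_of_natDegree_le (natDegree_starPoly_le hQ')).trans_lt
      (by exact_mod_cast m.lt_succ_self)
  have horth : ∫ z, conj (((m + 1 : ℕ) : ℂ) * P.eval z) * S.eval z ∂μ = 0 := by
    simp_rw [map_mul, mul_assoc]
    rw [integral_const_mul, hφ.integral_conj_mul_eq_zero hμ hSdeg, mul_zero]
  rw [l2norm_sq, l2norm_sq]
  calc ∫ z, ‖(derivative P).eval z‖ ^ 2 ∂μ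
      = ∫ z, ‖((m + 1 : ℕ) : ℂ) * P.eval z - S.eval z‖ ^ 2 ∂μ := by
        refine integral_congr_ae (hμ.ae_norm_eq_one.mono fun z hz => ?_)
        simp only [S, eval_sub, eval_mul, eval_C, eval_X, sub_sub_cancel, norm_mul, hz, one_mul]
    _ = ∫ z, ‖((m + 1 : ℕ) : ℂ) * P.eval z‖ ^ 2 ∂μ + ∫ z, ‖S.eval z‖ ^ 2 ∂μ :=
        integral_norm_sub_sq_of_integral_conj_mul_eq_zero (hμ.integrable (by fun_prop))
          (hμ.integrable (by fun_prop)) (hμ.integrable (by fun_prop)) horth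
    _ = _ := by
        simp_rw [norm_mul, mul_pow]
        rw [integral_const_mul, hφ.integral_norm_sq, ← hS]
        congr 1
        · rw [Complex.norm_natCast, mul_one]
        · exact integral_congr_ae (hμ.ae_norm_eq_one.mono fun z hz => by
            simp only [norm_eval_starPoly hQ' hz])

end Circle

lemma tendsto_one_iff_tendsto_zero_of_sq_eq_one_add_sq {ι : Type*} {l : Filter ι} {x y : ι → ℝ}
    (hx : ∀ i, 0 ≤ x i) (hy : ∀ i, 0 ≤ y i) (h : ∀ᶠ i in l, x i ^ 2 = 1 + y i ^ 2) :
    Tendsto x l (𝓝 1) ↔ Tendsto y l (𝓝 0) := by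
  constructor
  · intro hx1
    have hlim := ((hx1.pow 2).sub_const 1).sqrt
    rw [one_pow, sub_self, Real.sqrt_zero] at hlim
    refine hlim.congr' (h.mono fun i hi => ?_)
    rw [hi, add_sub_cancel_left, Real.sqrt_sq (hy i)]
  · intro hy0
    have hlim := ((hy0.pow 2).const_add 1).sqrt
    rw [zero_pow two_ne_zero, add_zero, Real.sqrt_one] at hlim
    refine hlim.congr' (h.mono fun i hi => ?_)
    rw [← hi, Real.sqrt_sq (hx i)]

theorem stmt0_general (μ : Measure ℂ) [IsProbabilityMeasure μ] (hcirc : OnCircle μ)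
    (φ : ℕ → Polynomial ℂ) (hφ : IsOPUC μ φ) :
    (∀ n : ℕ, 1 ≤ n →
      (l2norm μ (derivative (φ n)) / n) ^ 2
        = 1 + (l2norm μ (derivative (starPoly n (φ n))) / n) ^ 2) ∧
    (∀ n : ℕ, 1 ≤ n → 1 ≤ l2norm μ (derivative (φ n)) / n) ∧
    (NormalBehavior μ φ ↔
      Tendsto (fun n : ℕ => l2norm μ (derivative (starPoly n (φ n))) / n)
        atTop (𝓝 0)) := by
  have hnonneg (P : ℕ → ℂ[X]) (n : ℕ) : 0 ≤ l2norm μ (P n) / n :=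
    div_nonneg (l2norm_nonneg _ _) n.cast_nonneg
  have hsq (n : ℕ) (hn : 1 ≤ n) : (l2norm μ (derivative (φ n)) / n) ^ 2
      = 1 + (l2norm μ (derivative (starPoly n (φ n))) / n) ^ 2 := by
    have hn0 : (n : ℝ) ≠ 0 := by positivity
    rw [div_pow, div_pow, hφ.l2norm_derivative_sq hcirc (by omega)]
    field_simp
  refine ⟨hsq, fun n hn => ?_, ?_⟩
  · refine (one_le_sq_iff₀ (hnonneg (fun n => derivative (φ n)) n)).1 ?_
    rw [hsq n hn]
    exact le_add_of_nonneg_right (sq_nonneg _)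
  · exact tendsto_one_iff_tendsto_zero_of_sq_eq_one_add_sq (hnonneg _) (hnonneg _)
      ((eventually_ge_atTop 1).mono hsq)

/-- For a nontrivial probability measure on the unit circle,
`‖φ_n'/n‖² = 1 + ‖(φ_n^*)'/n‖²` for all `n ≥ 1`; hence `‖φ_n'/n‖ ≥ 1`, and
normality is equivalent to `‖(φ_n^*)'/n‖ → 0`. -/
theorem stmt0 (μ : Measure ℂ) [IsProbabilityMeasure μ] (hcirc : OnCircle μ)
    (hnt : NontrivialSupport μ) (φ : ℕ → Polynomial ℂ) (hφ : IsOPUC μ φ) :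
    (∀ n : ℕ, 1 ≤ n →
      (l2norm μ (derivative (φ n)) / n) ^ 2
        = 1 + (l2norm μ (derivative (starPoly n (φ n))) / n) ^ 2) ∧
    (∀ n : ℕ, 1 ≤ n → 1 ≤ l2norm μ (derivative (φ n)) / n) ∧
    (NormalBehavior μ φ ↔
      Tendsto (fun n : ℕ => l2norm μ (derivative (starPoly n (φ n))) / n)
        atTop (𝓝 0)) :=
  stmt0_general μ hcirc φ hφ
end
end

section
/- (Turán's inequality) Let P be a polynomial of degree n ≥ 1 all of whose zeros lie in the closed unit disk, i.e., P(z) = c·∏_{j=1}^n (z − z_j) with c ≠ 0 and |z_j| ≤ 1 for all j. Then for every θ ∈ ℝ, |P'(e^{iθ})| ≥ (n/2)·|P(e^{iθ})|. -/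
open MeasureTheory Polynomial Filter Topology ComplexConjugate

noncomputable section

/-!
At a point `w` of the unit circle that is not a zero of `P`, `w P'(w) / P(w) = ∑ⱼ w / (w - zⱼ)`,
and `Re (w / (w - ζ)) ≥ 1/2` whenever `‖ζ‖ ≤ ‖w‖`. Hence `‖w P'(w) / P(w)‖ ≥ n / 2`.
-/

open Finset

theorem eval_derivative_prod_X_sub_C {K ι : Type*} [Field K] (s : Finset ι) (z : ι → K) {x : K}
    (hx : ∀ j ∈ s, x ≠ z j) :
    (derivative (∏ j ∈ s, (X - C (z j)))).eval x
      = (∏ j ∈ s, (X - C (z j))).eval x * ∑ j ∈ s, (x - z j)⁻¹ := by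
  classical
  simp only [derivative_prod_finset, derivative_X_sub_C, mul_one, eval_finsetSum, eval_prod,
    eval_sub, eval_X, eval_C, mul_sum]
  refine sum_congr rfl fun j hj => ?_
  rw [← prod_erase_mul s _ hj, mul_inv_cancel_right₀ (sub_ne_zero.2 (hx j hj))]

-- `Re (w / (w - ζ)) - 1/2 = (‖w‖² - ‖ζ‖²) / (2 ‖w - ζ‖²)`
theorem Complex.one_half_le_re_div_sub {w ζ : ℂ} (h : ‖ζ‖ ≤ ‖w‖) (hne : w ≠ ζ) :
    1 / 2 ≤ (w / (w - ζ)).re := by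
  have hpos : 0 < Complex.normSq (w - ζ) := Complex.normSq_pos.2 (sub_ne_zero.2 hne)
  have hsq : ζ.re ^ 2 + ζ.im ^ 2 ≤ w.re ^ 2 + w.im ^ 2 := by
    simpa [← Complex.normSq_apply, Complex.normSq_eq_norm_sq, sq] using
      mul_self_le_mul_self (norm_nonneg ζ) h
  rw [Complex.div_re, ← add_div, le_div_iff₀ hpos, Complex.normSq_apply]
  simp only [Complex.sub_re, Complex.sub_im]
  nlinarith

theorem card_div_two_le_norm_sum_div_sub {ι : Type*} (s : Finset ι) (z : ι → ℂ) {w : ℂ}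
    (hz : ∀ j ∈ s, ‖z j‖ ≤ ‖w‖) (hw : ∀ j ∈ s, w ≠ z j) :
    (#s / 2 : ℝ) ≤ ‖∑ j ∈ s, w / (w - z j)‖ :=
  calc (#s / 2 : ℝ) = ∑ _j ∈ s, (1 / 2 : ℝ) := by simp [div_eq_mul_inv]
    _ ≤ ∑ j ∈ s, (w / (w - z j)).re :=
      sum_le_sum fun j hj => Complex.one_half_le_re_div_sub (hz j hj) (hw j hj)
    _ = (∑ j ∈ s, w / (w - z j)).re := (Complex.re_sum _ _).symm
    _ ≤ _ := Complex.re_le_norm _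

theorem card_div_two_mul_norm_eval_prod_le {ι : Type*} (s : Finset ι) (z : ι → ℂ) {w : ℂ}
    (hz : ∀ j ∈ s, ‖z j‖ ≤ ‖w‖) :
    (#s / 2 : ℝ) * ‖(∏ j ∈ s, (X - C (z j))).eval w‖
      ≤ ‖w‖ * ‖(derivative (∏ j ∈ s, (X - C (z j)))).eval w‖ := by
  by_cases hroot : ∃ j ∈ s, w = z j
  · obtain ⟨j, hj, rfl⟩ := hroot
    have : (∏ k ∈ s, (X - C (z k))).eval (z j) = 0 := by
      simpa [eval_prod] using prod_eq_zero hj (sub_self (z j))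
    rw [this, norm_zero, mul_zero]
    positivity
  push Not at hroot
  rw [eval_derivative_prod_X_sub_C s z hroot, norm_mul, mul_left_comm, ← norm_mul, mul_sum,
    mul_comm (#s / 2 : ℝ)]
  simp only [← div_eq_mul_inv]
  exact mul_le_mul_of_nonneg_left (card_div_two_le_norm_sum_div_sub s z hz hroot) (norm_nonneg _)

theorem stmt2_general (n : ℕ) (c : ℂ) (z : ℕ → ℂ)
    (hz : ∀ j ∈ Finset.range n, ‖z j‖ ≤ 1)
    (P : Polynomial ℂ)
    (hP : P = Polynomial.C c * ∏ j ∈ Finset.range n, (X - Polynomial.C (z j))) :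
    ∀ θ : ℝ, (n / 2 : ℝ) * ‖P.eval (Complex.exp (θ * Complex.I))‖
      ≤ ‖(derivative P).eval (Complex.exp (θ * Complex.I))‖ := by
  intro θ
  have hw : ‖Complex.exp (θ * Complex.I)‖ = 1 := Complex.norm_exp_ofReal_mul_I θ
  have key := card_div_two_mul_norm_eval_prod_le (range n) z (hw ▸ hz)
  rw [card_range, hw, one_mul] at key
  rw [hP, derivative_C_mul, eval_C_mul, eval_C_mul, norm_mul, norm_mul, mul_left_comm]
  exact mul_le_mul_of_nonneg_left key (norm_nonneg c)

/-- **Turán's inequality.** If all zeros of a degree-`n` polynomial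
lie in the closed unit disk, then `|P'(e^{iθ})| ≥ (n/2)|P(e^{iθ})|` on the unit circle. -/
theorem stmt2 (n : ℕ) (hn : 1 ≤ n) (c : ℂ) (hc : c ≠ 0) (z : ℕ → ℂ)
    (hz : ∀ j ∈ Finset.range n, ‖z j‖ ≤ 1)
    (P : Polynomial ℂ)
    (hP : P = Polynomial.C c * ∏ j ∈ Finset.range n, (X - Polynomial.C (z j))) :
    ∀ θ : ℝ, (n / 2 : ℝ) * ‖P.eval (Complex.exp (θ * Complex.I))‖
      ≤ ‖(derivative P).eval (Complex.exp (θ * Complex.I))‖ :=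
  stmt2_general n c z hz P hP
end
end
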